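/- arXiv:2409.02772 — 2 statements merged into one kernel-verified Lean document; each statement's English description precedes it below -/
import Mathlib

section
/- Identifiability of the variant block under independence and invertibility (discrete case): let X = f(Z_A, Z_B) with Z_A and Z_B independent discrete random variables and f injective. Suppose g(X) = (g₁(X), g₂(X)) satisfies H(g(X)) information-preservation I(X; g(X)) = H(X), and g₁(X) = h(Z_A) for some bijection h. Then I(X; g₂(X)) ≥ H(Z_B); if moreover g₂(X) is a function of Z_B, then H(g₂(X)) = H(Z_B) and g₂(X) determines Z_B. -/
open Finset

/-- Pushforward pmf of a random variable `X` on a finite sample space with pmf `μ`. -/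
noncomputable def pushpmf {Ω S : Type*} [Fintype Ω] [DecidableEq S]
    (μ : Ω → ℝ) (X : Ω → S) : S → ℝ :=
  fun s => ∑ ω ∈ Finset.univ.filter (fun ω => X ω = s), μ ω

/-- Shannon entropy of a random variable on a finite sample space with pmf `μ`. -/
noncomputable def entRV {Ω S : Type*} [Fintype Ω] [Fintype S] [DecidableEq S]
    (μ : Ω → ℝ) (X : Ω → S) : ℝ :=
  -∑ s, pushpmf μ X s * Real.log (pushpmf μ X s)

/-- Mutual information `I(X; Y)` on a finite sample space with pmf `μ`. -/
noncomputable def mutInfo {Ω S T : Type*} [Fintype Ω] [Fintype S] [Fintype T]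
    [DecidableEq S] [DecidableEq T] (μ : Ω → ℝ) (X : Ω → S) (Y : Ω → T) : ℝ :=
  entRV μ X + entRV μ Y - entRV μ (fun ω => (X ω, Y ω))

/-!
Entropy is additive over independent pairs and invariant under injective relabelling, so
`H(X) = H(Z_A) + H(Z_B)` and `H(g₁(X)) = H(Z_A)`. Since `g(X)` is a function of `X`,
`I(X; g(X)) = H(g(X))`, and independence of the blocks splits this as `H(g₁(X)) + H(g₂(X))`;
hence `I(X; g₂(X)) = H(g₂(X)) = H(Z_B)`. If `g₂(X) = φ(Z_B)`, equality `H(φ(Z_B)) = H(Z_B)` forces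
`φ` to be injective on the support of `Z_B`: writing both entropies as expectations over `Ω`,
each summand of `H(Z_B) - H(φ(Z_B))` is `μ ω * log (q / p) ≥ 0`, where `p ≤ q` are the masses of
the fibres of `Z_B` and of `φ(Z_B)` through `ω`, so every `p` equals its `q`.
-/

namespace pushpmf

variable {Ω S T : Type*} [Fintype Ω] [DecidableEq S] [DecidableEq T] (μ : Ω → ℝ)

lemma le_apply_self (hμ : ∀ ω, 0 ≤ μ ω) (Y : Ω → S) (ω : Ω) :
    μ ω ≤ pushpmf μ Y (Y ω) :=
  Finset.single_le_sum (fun i _ => hμ i) (by simp)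

lemma comp_injective_apply {k : S → T} (hk : Function.Injective k) (Y : Ω → S) (s : S) :
    pushpmf μ (fun ω => k (Y ω)) (k s) = pushpmf μ Y s := by
  simp only [pushpmf, hk.eq_iff]

lemma add_le_comp_apply (hμ : ∀ ω, 0 ≤ μ ω) (Y : Ω → S) (k : S → T) {ω ω' : Ω}
    (hne : Y ω' ≠ Y ω) (hk : k (Y ω') = k (Y ω)) :
    pushpmf μ Y (Y ω) + μ ω' ≤ pushpmf μ (fun ω => k (Y ω)) (k (Y ω)) := by
  classical
  have hnot : ω' ∉ univ.filter (fun i => Y i = Y ω) := by simpa using hne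
  have hsub : insert ω' (univ.filter (fun i => Y i = Y ω))
      ⊆ univ.filter (fun i => k (Y i) = k (Y ω)) := by
    intro i hi
    simp only [mem_insert, mem_filter, mem_univ, true_and] at hi ⊢
    rcases hi with rfl | hi
    · exact hk
    · rw [hi]
  calc pushpmf μ Y (Y ω) + μ ω' = ∑ i ∈ insert ω' (univ.filter (fun i => Y i = Y ω)), μ i := by
        rw [sum_insert hnot, add_comm]; rfl
    _ ≤ _ := sum_le_sum_of_subset_of_nonneg hsub (fun i _ _ => hμ i)

lemma le_comp_apply (hμ : ∀ ω, 0 ≤ μ ω) (Y : Ω → S) (k : S → T) (s : S) :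
    pushpmf μ Y s ≤ pushpmf μ (fun ω => k (Y ω)) (k s) :=
  sum_le_sum_of_subset_of_nonneg (fun i => by simp_all) (fun i _ _ => hμ i)

end pushpmf

namespace entRV

variable {Ω S T : Type*} [Fintype Ω] [Fintype S] [Fintype T] [DecidableEq S] [DecidableEq T]
  (μ : Ω → ℝ)

lemma eq_neg_sum_log_pushpmf (Y : Ω → S) :
    entRV μ Y = -∑ ω, μ ω * Real.log (pushpmf μ Y (Y ω)) := by
  rw [entRV, ← sum_fiberwise univ Y (fun ω => μ ω * Real.log (pushpmf μ Y (Y ω)))]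
  congr 1
  refine sum_congr rfl fun s _ => ?_
  rw [pushpmf, sum_mul]
  refine sum_congr rfl fun ω hω => ?_
  rw [(mem_filter.mp hω).2]
  rfl

lemma comp_injective {k : S → T} (hk : Function.Injective k) (Y : Ω → S) :
    entRV μ (fun ω => k (Y ω)) = entRV μ Y := by
  simp only [eq_neg_sum_log_pushpmf, pushpmf.comp_injective_apply μ hk]

lemma pair_of_indep (hμ : ∀ ω, 0 ≤ μ ω) (Y : Ω → S) (Z : Ω → T)
    (hind : ∀ s t, pushpmf μ (fun ω => (Y ω, Z ω)) (s, t) = pushpmf μ Y s * pushpmf μ Z t) :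
    entRV μ (fun ω => (Y ω, Z ω)) = entRV μ Y + entRV μ Z := by
  simp only [eq_neg_sum_log_pushpmf, ← neg_add, ← sum_add_distrib, hind]
  congr 1
  refine sum_congr rfl fun ω _ => ?_
  rcases (hμ ω).eq_or_lt with hz | hpos
  · simp [← hz]
  · have hY := hpos.trans_le (pushpmf.le_apply_self μ hμ Y ω)
    have hZ := hpos.trans_le (pushpmf.le_apply_self μ hμ Z ω)
    rw [Real.log_mul hY.ne' hZ.ne', mul_add]

lemma eq_of_comp_eq (hμ : ∀ ω, 0 ≤ μ ω) (Y : Ω → S) (k : S → T)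
    (heq : entRV μ (fun ω => k (Y ω)) = entRV μ Y) {ω ω' : Ω} (hk : k (Y ω) = k (Y ω'))
    (hω : 0 < μ ω) (hω' : 0 < μ ω') : Y ω = Y ω' := by
  set p := fun i => pushpmf μ Y (Y i)
  set q := fun i => pushpmf μ (fun ω => k (Y ω)) (k (Y i))
  have hp : ∀ i, 0 < μ i → 0 < p i := fun i hi => hi.trans_le (pushpmf.le_apply_self μ hμ Y i)
  have hpq : ∀ i, p i ≤ q i := fun i => pushpmf.le_comp_apply μ hμ Y k (Y i)
  have hterm : ∀ i, 0 ≤ μ i * (Real.log (q i) - Real.log (p i)) := by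
    intro i
    rcases (hμ i).eq_or_lt with hz | hi
    · simp [← hz]
    · exact mul_nonneg hi.le (sub_nonneg.mpr (Real.log_le_log (hp i hi) (hpq i)))
  have hsum : ∑ i, μ i * (Real.log (q i) - Real.log (p i)) = 0 := by
    simp only [mul_sub, sum_sub_distrib]
    rw [eq_neg_sum_log_pushpmf, eq_neg_sum_log_pushpmf] at heq
    linarith
  have hlog : Real.log (q ω) = Real.log (p ω) := by
    have := (sum_eq_zero_iff_of_nonneg (fun i _ => hterm i)).mp hsum ω (mem_univ ω)
    linarith [(mul_eq_zero.mp this).resolve_left hω.ne']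
  have hqp : q ω = p ω :=
    Real.log_injOn_pos (Set.mem_Ioi.mpr ((hp ω hω).trans_le (hpq ω)))
      (Set.mem_Ioi.mpr (hp ω hω)) hlog
  by_contra hne
  have := pushpmf.add_le_comp_apply μ hμ Y k (Ne.symm hne) hk.symm
  linarith

end entRV

lemma mutInfo_self_comp {Ω S T : Type*} [Fintype Ω] [Fintype S] [Fintype T]
    [DecidableEq S] [DecidableEq T] (μ : Ω → ℝ) (Y : Ω → S) (k : S → T) :
    mutInfo μ Y (fun ω => k (Y ω)) = entRV μ (fun ω => k (Y ω)) := by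
  have hinj : Function.Injective (fun s => (s, k s)) := fun _ _ h => congrArg Prod.fst h
  rw [mutInfo, entRV.comp_injective μ hinj Y]
  ring

theorem variant_block_identifiability_discrete_general
    {Ω A B Xt U V : Type*} [Fintype Ω] [Fintype A] [Fintype B] [Fintype Xt]
    [Fintype U] [Fintype V] [DecidableEq A] [DecidableEq B] [DecidableEq Xt]
    [DecidableEq U] [DecidableEq V]
    (μ : Ω → ℝ) (hμ0 : ∀ ω, 0 ≤ μ ω)
    (ZA : Ω → A) (ZB : Ω → B) (X : Ω → Xt) (f : A × B → Xt)
    (hf : Function.Injective f) (hX : ∀ ω, X ω = f (ZA ω, ZB ω))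
    (hAB_indep : ∀ a b, pushpmf μ (fun ω => (ZA ω, ZB ω)) (a, b)
      = pushpmf μ ZA a * pushpmf μ ZB b)
    (g₁ : Xt → U) (g₂ : Xt → V) (h : A → U) (hh : Function.Bijective h)
    (hg₁ : ∀ ω, g₁ (X ω) = h (ZA ω))
    (hg_indep : ∀ u v, pushpmf μ (fun ω => (g₁ (X ω), g₂ (X ω))) (u, v)
      = pushpmf μ (fun ω => g₁ (X ω)) u * pushpmf μ (fun ω => g₂ (X ω)) v)
    (hinfo : mutInfo μ X (fun ω => (g₁ (X ω), g₂ (X ω))) = entRV μ X) :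
    entRV μ ZB ≤ mutInfo μ X (fun ω => g₂ (X ω)) ∧
      ((∃ φ : B → V, ∀ ω, g₂ (X ω) = φ (ZB ω)) →
        entRV μ (fun ω => g₂ (X ω)) = entRV μ ZB ∧
        ∀ ω ω', g₂ (X ω) = g₂ (X ω') → 0 < μ ω → 0 < μ ω' → ZB ω = ZB ω') := by
  have hHX : entRV μ X = entRV μ ZA + entRV μ ZB := by
    rw [funext hX, entRV.comp_injective μ hf (fun ω => (ZA ω, ZB ω)),
      entRV.pair_of_indep μ hμ0 ZA ZB hAB_indep]
  have hHg₁ : entRV μ (fun ω => g₁ (X ω)) = entRV μ ZA := by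
    rw [funext hg₁, entRV.comp_injective μ hh.injective ZA]
  have hHg : entRV μ (fun ω => (g₁ (X ω), g₂ (X ω))) = entRV μ X := by
    rwa [mutInfo_self_comp μ X (fun x => (g₁ x, g₂ x))] at hinfo
  have hHg₂ : entRV μ (fun ω => g₂ (X ω)) = entRV μ ZB := by
    have := entRV.pair_of_indep μ hμ0 _ _ hg_indep
    linarith
  refine ⟨(mutInfo_self_comp μ X g₂ ▸ hHg₂).ge, fun ⟨φ, hφ⟩ => ⟨hHg₂, ?_⟩⟩
  intro ω ω' heq hω hω'
  rw [funext hφ] at hHg₂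
  exact entRV.eq_of_comp_eq μ hμ0 ZB φ hHg₂ (by rwa [← hφ, ← hφ]) hω hω'

/-- Identifiability of the variant block under independence and invertibility (discrete case):
if `X = f(Z_A, Z_B)` with `Z_A ⟂ Z_B` and `f` injective, `g(X) = (g₁(X), g₂(X))` preserves all
information (`I(X; g(X)) = H(X)`), `g₁(X) = h(Z_A)` for a bijection `h`, and the two encoding
blocks `g₁(X), g₂(X)` are independent, then `I(X; g₂(X)) ≥ H(Z_B)`; and if moreover `g₂(X)` is a
function of `Z_B`, then `H(g₂(X)) = H(Z_B)` and `g₂(X)` determines `Z_B` on the support. -/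
theorem variant_block_identifiability_discrete
    {Ω A B Xt U V : Type*} [Fintype Ω] [Fintype A] [Fintype B] [Fintype Xt]
    [Fintype U] [Fintype V] [DecidableEq A] [DecidableEq B] [DecidableEq Xt]
    [DecidableEq U] [DecidableEq V]
    (μ : Ω → ℝ) (hμ0 : ∀ ω, 0 ≤ μ ω) (hμ1 : ∑ ω, μ ω = 1)
    (ZA : Ω → A) (ZB : Ω → B) (X : Ω → Xt) (f : A × B → Xt)
    (hf : Function.Injective f) (hX : ∀ ω, X ω = f (ZA ω, ZB ω))
    (hAB_indep : ∀ a b, pushpmf μ (fun ω => (ZA ω, ZB ω)) (a, b)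
      = pushpmf μ ZA a * pushpmf μ ZB b)
    (g₁ : Xt → U) (g₂ : Xt → V) (h : A → U) (hh : Function.Bijective h)
    (hg₁ : ∀ ω, g₁ (X ω) = h (ZA ω))
    (hg_indep : ∀ u v, pushpmf μ (fun ω => (g₁ (X ω), g₂ (X ω))) (u, v)
      = pushpmf μ (fun ω => g₁ (X ω)) u * pushpmf μ (fun ω => g₂ (X ω)) v)
    (hinfo : mutInfo μ X (fun ω => (g₁ (X ω), g₂ (X ω))) = entRV μ X) :
    entRV μ ZB ≤ mutInfo μ X (fun ω => g₂ (X ω)) ∧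
      ((∃ φ : B → V, ∀ ω, g₂ (X ω) = φ (ZB ω)) →
        entRV μ (fun ω => g₂ (X ω)) = entRV μ ZB ∧
        ∀ ω ω', g₂ (X ω) = g₂ (X ω') → 0 < μ ω → 0 < μ ω' → ZB ω = ZB ω') :=
  variant_block_identifiability_discrete_general μ hμ0 ZA ZB X f hf hX hAB_indep g₁ g₂ h hh hg₁
    hg_indep hinfo
end

section
/- Non-identifiability of variant latents: there exist a diffeomorphism f : ℝ² → ℝ² (the identity), a representation map ẑ(z) = (h(z₁), z₂ − z₁) for any diffeomorphism h : ℝ → ℝ, and a decoder f̂(ŷ) = (h^{-1}(ŷ₁), ŷ₂ + h^{-1}(ŷ₁)) such that f̂(ẑ(z)) = f(z) for all z ∈ ℝ², the first component ẑ₁ identifies z₁ up to the diffeomorphism h, yet ẑ₂ = z₂ − z₁ genuinely depends on z₁ (its partial derivative in z₁ is −1 ≠ 0). -/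
/-- Non-identifiability of variant latents: with `f = id` on `ℝ²`, the representation
`zhat(z) = (h z₁, z₂ − z₁)` (for any diffeomorphism `h : ℝ → ℝ` with inverse `hinv`) together
with the decoder `fhat(y) = (hinv y₁, y₂ + hinv y₁)` reproduces the data (`fhat ∘ zhat = id`),
`zhat` is a diffeomorphism of `ℝ²` whose first component identifies `z₁` up to `h`, yet the
second component `z₂ − z₁` genuinely depends on `z₁`: its partial derivative in `z₁` is `−1`. -/
theorem variant_latent_non_identifiability
    (h hinv : ℝ → ℝ)
    (hsmooth : ContDiff ℝ (⊤ : ℕ∞) h) (hinvsmooth : ContDiff ℝ (⊤ : ℕ∞) hinv)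
    (hli : Function.LeftInverse hinv h) (hri : Function.RightInverse hinv h) :
    let zhat : ℝ × ℝ → ℝ × ℝ := fun z => (h z.1, z.2 - z.1)
    let fhat : ℝ × ℝ → ℝ × ℝ := fun y => (hinv y.1, y.2 + hinv y.1)
    (∀ z : ℝ × ℝ, fhat (zhat z) = z) ∧
    Function.Bijective zhat ∧ ContDiff ℝ (⊤ : ℕ∞) zhat ∧
    (∃ zhatinv : ℝ × ℝ → ℝ × ℝ, ContDiff ℝ (⊤ : ℕ∞) zhatinv ∧
      Function.LeftInverse zhatinv zhat ∧ Function.RightInverse zhatinv zhat) ∧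
    (∀ z : ℝ × ℝ, (zhat z).1 = h z.1) ∧
    (∀ z₁ z₂ : ℝ, HasDerivAt (fun t => (zhat (t, z₂)).2) (-1) z₁) := by
  intro zhat fhat
  have hinverse : ∀ z : ℝ × ℝ, fhat (zhat z) = z := by
    intro z
    simp only [zhat, fhat, hli z.1]
    ring_nf
  have hrinv : ∀ y : ℝ × ℝ, zhat (fhat y) = y := by
    intro y
    simp only [zhat, fhat, hri y.1]
    ring_nf
  refine ⟨hinverse, ⟨Function.LeftInverse.injective hinverse,
    Function.RightInverse.surjective hrinv⟩, ?_, ⟨fhat, ?_, hinverse, hrinv⟩, fun z => rfl, ?_⟩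
  · exact ContDiff.prodMk (hsmooth.comp contDiff_fst) (contDiff_snd.sub contDiff_fst)
  · exact ContDiff.prodMk (hinvsmooth.comp contDiff_fst)
      (contDiff_snd.add (hinvsmooth.comp contDiff_fst))
  · intro z₁ z₂
    simpa using (hasDerivAt_id z₁).const_sub z₂
end
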